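/- arXiv:2505.04077 — 2 statements merged into one kernel-verified Lean document; each statement's English description precedes it below -/
import Mathlib

section
/- Let d ≥ 1 and let a, b > 0 satisfy a + b > d and max{a,b} ≠ d. Then there is a constant C depending only on a, b, d such that for all m ∈ ℤ^d, the sum over n₁ ∈ ℤ^d of 1/(|n₁|^a · |m - n₁|^b) is at most C / |m|^min{a, b, a+b-d}, where |n| denotes max(‖n‖_∞, 1) for n ∈ ℤ^d. -/
/-- For `n ∈ ℤ^d`, `|n| = max(‖n‖_∞, 1)`. -/
noncomputable def znorm {d : ℕ} (n : Fin d → ℤ) : ℝ :=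
  max ((Finset.univ.sup fun i => (n i).natAbs : ℕ) : ℝ) 1

/-!
Split the sum according to whether `|n₁| ≤ |m - n₁|` or not. On the first part
`max (|n₁|, |m|) ≤ 2 |m - n₁|`, so the summand is at most
`2^b |n₁|^(-a) max (|n₁|, |m|)^(-b)`; the second part is symmetric after `n₁ ↦ m - n₁`.
With `M = |m|`, the sum of `|n|^(-a) max (|n|, M)^(-b)` over the ball `|n| ≤ M` is `M^(-b)`
times `O(M^(d-a))` if `a < d` and `O(1)` if `a > d`; if `a = d` then `b > d`, and
`|n|^(-d) ≤ M^(b-d) |n|^(-b)` there. Over `|n| > M` it is the tail of `|n|^(-(a+b))`, which is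
`O(M^(d-a-b))`. These ball and tail bounds follow by dyadic decomposition from the count of at
most `(3R)^d` points with `|n| ≤ R`.
-/

open Finset

section

variable {d : ℕ}

theorem natAbs_le_norm (n : Fin d → ℤ) (i : Fin d) : ((n i).natAbs : ℝ) ≤ ‖n‖ := by
  rw [Nat.cast_natAbs, Int.cast_abs, ← Int.norm_eq_abs]
  exact norm_le_pi_norm n i

theorem znorm_eq_max_norm (n : Fin d → ℤ) : znorm n = max ‖n‖ 1 := by
  rw [znorm]
  congr 1
  refine le_antisymm ?_ ((pi_norm_le_iff_of_nonneg (by positivity)).2 fun i => ?_)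
  · exact (Nat.le_floor_iff (norm_nonneg n)).1
      (Finset.sup_le fun i _ => Nat.le_floor (natAbs_le_norm n i))
  · rw [Int.norm_eq_abs, ← Int.cast_abs, ← Nat.cast_natAbs]
    exact_mod_cast le_sup (f := fun i => (n i).natAbs) (mem_univ i)

theorem one_le_znorm (n : Fin d → ℤ) : 1 ≤ znorm n := le_max_right _ _

theorem norm_le_znorm (n : Fin d → ℤ) : ‖n‖ ≤ znorm n :=
  (le_max_left _ _).trans_eq (znorm_eq_max_norm n).symm

theorem znorm_pos (n : Fin d → ℤ) : 0 < znorm n := one_pos.trans_le (one_le_znorm n)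

theorem znorm_add_le (x y : Fin d → ℤ) : znorm (x + y) ≤ znorm x + znorm y := by
  simp only [znorm_eq_max_norm]
  refine max_le ((norm_add_le x y).trans (add_le_add (le_max_left _ _) (le_max_left _ _))) ?_
  linarith [le_max_right ‖x‖ 1, le_max_right ‖y‖ 1]

theorem card_le_of_forall_znorm_le {R : ℝ} (hR : 0 ≤ R) (F : Finset (Fin d → ℤ))
    (hF : ∀ n ∈ F, znorm n ≤ R) : (#F : ℝ) ≤ (3 * R) ^ d := by
  obtain rfl | ⟨n₀, hn₀⟩ := F.eq_empty_or_nonempty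
  · simpa using pow_nonneg (by positivity : 0 ≤ 3 * R) d
  have hR₁ : 1 ≤ R := (one_le_znorm n₀).trans (hF n₀ hn₀)
  set K := ⌊R⌋₊
  have hsub : F ⊆ Fintype.piFinset fun _ => Icc (-(K : ℤ)) K := by
    intro n hn
    rw [Fintype.mem_piFinset]
    intro i
    have : (n i).natAbs ≤ K := Nat.le_floor <| (natAbs_le_norm n i).trans <|
      (norm_le_znorm n).trans (hF n hn)
    rw [mem_Icc]
    omega
  calc (#F : ℝ) ≤ #(Fintype.piFinset fun _ : Fin d => Icc (-(K : ℤ)) K) := by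
        exact_mod_cast card_le_card hsub
    _ = (2 * K + 1) ^ d := by
        rw [Fintype.card_piFinset, prod_const, Int.card_Icc, card_univ, Fintype.card_fin,
          show (K : ℤ) + 1 - -K = ((2 * K + 1 : ℕ) : ℤ) by push_cast; ring, Int.toNat_natCast]
        push_cast
        rfl
    _ ≤ (3 * R) ^ d := by
        gcongr
        linarith [Nat.floor_le (zero_le_one.trans hR₁)]

theorem sum_znorm_rpow_neg_le_of_mem_shell {s ρ R : ℝ} (hs : 0 ≤ s) (hρ : 0 < ρ)
    (hR : 0 ≤ R) (F : Finset (Fin d → ℤ))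
    (hF : ∀ n ∈ F, ρ ≤ znorm n ∧ znorm n ≤ R) :
    ∑ n ∈ F, znorm n ^ (-s) ≤ (3 * R) ^ d * ρ ^ (-s) :=
  calc ∑ n ∈ F, znorm n ^ (-s) ≤ ∑ _n ∈ F, ρ ^ (-s) :=
        sum_le_sum fun n hn => Real.rpow_le_rpow_of_nonpos hρ (hF n hn).1 (by linarith)
    _ = #F * ρ ^ (-s) := by rw [sum_const, nsmul_eq_mul]
    _ ≤ (3 * R) ^ d * ρ ^ (-s) := by
        gcongr
        exact card_le_of_forall_znorm_le hR F fun n hn => (hF n hn).2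

theorem half_rpow {R : ℝ} (hR : 0 ≤ R) (x : ℝ) : (R / 2) ^ x = 2 ^ (-x) * R ^ x := by
  rw [Real.div_rpow hR zero_le_two, Real.rpow_neg zero_le_two, div_eq_inv_mul]

theorem pow_mul_rpow_neg {R : ℝ} (hR : 0 < R) (d : ℕ) (s : ℝ) :
    R ^ d * R ^ (-s) = R ^ ((d : ℝ) - s) := by
  rw [← Real.rpow_natCast, ← Real.rpow_add hR, sub_eq_add_neg]

theorem exists_sum_znorm_rpow_neg_le_of_forall_le {s : ℝ} (hs : 0 ≤ s) (hsd : s < d) :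
    ∃ C > 0, ∀ R > 0, ∀ F : Finset (Fin d → ℤ), (∀ n ∈ F, znorm n ≤ R) →
      ∑ n ∈ F, znorm n ^ (-s) ≤ C * R ^ ((d : ℝ) - s) := by
  set q : ℝ := 2 ^ (s - d)
  have hq : q < 1 := Real.rpow_lt_one_of_one_lt_of_neg one_lt_two (by linarith)
  set C : ℝ := 3 ^ d * 2 ^ s / (1 - q)
  have hC : 0 < C := div_pos (by positivity) (by linarith)
  have hCq : C * q + 3 ^ d * 2 ^ s = C := by
    have := div_mul_cancel₀ ((3 : ℝ) ^ d * 2 ^ s) (sub_ne_zero.2 hq.ne')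
    linarith
  -- dyadic induction: peel off the shell `R / 2 < znorm n ≤ R`
  have key : ∀ K : ℕ, ∀ R > 0, R < 2 ^ K → ∀ F : Finset (Fin d → ℤ),
      (∀ n ∈ F, znorm n ≤ R) → ∑ n ∈ F, znorm n ^ (-s) ≤ C * R ^ ((d : ℝ) - s) := by
    intro K
    induction K with
    | zero =>
      intro R hR hR₁ F hF
      have : F = ∅ := eq_empty_of_forall_notMem fun n hn => by
        linarith [hF n hn, one_le_znorm n, (pow_zero (2 : ℝ)) ▸ hR₁]
      subst this
      simp only [sum_empty]
      positivity
    | succ K ih =>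
      intro R hR hRK F hF
      rw [← sum_filter_add_sum_filter_not F fun n => znorm n ≤ R / 2]
      have hinner := ih (R / 2) (by positivity) (by rw [pow_succ] at hRK; linarith)
        (F.filter fun n => znorm n ≤ R / 2) fun n hn => (mem_filter.1 hn).2
      have hshell := sum_znorm_rpow_neg_le_of_mem_shell hs (half_pos hR) hR.le
        (F.filter fun n => ¬znorm n ≤ R / 2) fun n hn =>
          ⟨(not_le.1 (mem_filter.1 hn).2).le, hF n (mem_filter.1 hn).1⟩
      calc _ ≤ C * (R / 2) ^ ((d : ℝ) - s) + (3 * R) ^ d * (R / 2) ^ (-s) :=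
            add_le_add hinner hshell
        _ = (C * q + 3 ^ d * 2 ^ s) * R ^ ((d : ℝ) - s) := by
            rw [half_rpow hR.le, half_rpow hR.le, neg_sub, neg_neg, mul_pow,
              ← pow_mul_rpow_neg hR]
            ring
        _ = C * R ^ ((d : ℝ) - s) := by rw [hCq]
  refine ⟨C, hC, fun R hR => ?_⟩
  obtain ⟨K, hK⟩ := pow_unbounded_of_one_lt R one_lt_two
  exact key K R hR hK

theorem exists_sum_znorm_rpow_neg_le_of_forall_ge {s : ℝ} (hds : d < s) :
    ∃ C > 0, ∀ R > 0, ∀ F : Finset (Fin d → ℤ), (∀ n ∈ F, R ≤ znorm n) →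
      ∑ n ∈ F, znorm n ^ (-s) ≤ C * R ^ ((d : ℝ) - s) := by
  set q : ℝ := 2 ^ ((d : ℝ) - s)
  have hq : q < 1 := Real.rpow_lt_one_of_one_lt_of_neg one_lt_two (by linarith)
  set C : ℝ := 6 ^ d / (1 - q)
  have hC : 0 < C := div_pos (by positivity) (by linarith)
  have hCq : C * q + 6 ^ d = C := by
    have := div_mul_cancel₀ ((6 : ℝ) ^ d) (sub_ne_zero.2 hq.ne')
    linarith
  -- dyadic induction: peel off the shell `R ≤ znorm n < 2 * R`
  have key : ∀ K : ℕ, ∀ R > 0, ∀ F : Finset (Fin d → ℤ),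
      (∀ n ∈ F, R ≤ znorm n ∧ znorm n < 2 ^ K * R) →
        ∑ n ∈ F, znorm n ^ (-s) ≤ C * R ^ ((d : ℝ) - s) := by
    intro K
    induction K with
    | zero =>
      intro R hR F hF
      have : F = ∅ := eq_empty_of_forall_notMem fun n hn => by
        have := hF n hn
        rw [pow_zero, one_mul] at this
        linarith
      subst this
      simp only [sum_empty]
      positivity
    | succ K ih =>
      intro R hR F hF
      rw [← sum_filter_add_sum_filter_not F fun n => znorm n < 2 * R, add_comm]
      have hrest := ih (2 * R) (by positivity) (F.filter fun n => ¬znorm n < 2 * R)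
        fun n hn => ⟨not_lt.1 (mem_filter.1 hn).2, by
          rw [← mul_assoc, ← pow_succ]; exact (hF n (mem_filter.1 hn).1).2⟩
      have hshell := sum_znorm_rpow_neg_le_of_mem_shell ((Nat.cast_nonneg d).trans hds.le)
        hR (by positivity : (0 : ℝ) ≤ 2 * R) (F.filter fun n => znorm n < 2 * R)
          fun n hn => ⟨(hF n (mem_filter.1 hn).1).1, (mem_filter.1 hn).2.le⟩
      calc _ ≤ C * (2 * R) ^ ((d : ℝ) - s) + (3 * (2 * R)) ^ d * R ^ (-s) :=
            add_le_add hrest hshell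
        _ = (C * q + 6 ^ d) * R ^ ((d : ℝ) - s) := by
            rw [Real.mul_rpow zero_le_two hR.le, show 3 * (2 * R) = 6 * R by ring, mul_pow,
              mul_assoc, pow_mul_rpow_neg hR]
            ring
        _ = C * R ^ ((d : ℝ) - s) := by rw [hCq]
  refine ⟨C, hC, fun R hR F hF => ?_⟩
  obtain ⟨B, hB⟩ := (F.image znorm).exists_le
  obtain ⟨K, hK⟩ := pow_unbounded_of_one_lt (B / R) one_lt_two
  refine key K R hR F fun n hn => ⟨hF n hn, ?_⟩
  calc znorm n ≤ B := hB _ (mem_image_of_mem znorm hn)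
    _ < 2 ^ K * R := (div_lt_iff₀ hR).1 hK

theorem exists_sum_znorm_rpow_neg_le {s : ℝ} (hds : d < s) :
    ∃ C > 0, ∀ F : Finset (Fin d → ℤ), ∑ n ∈ F, znorm n ^ (-s) ≤ C := by
  obtain ⟨C, hC, h⟩ := exists_sum_znorm_rpow_neg_le_of_forall_ge hds
  exact ⟨C, hC, fun F => by simpa using h 1 one_pos F fun n _ => one_le_znorm n⟩

theorem exists_rpow_neg_mul_sum_znorm_rpow_neg_le {a b r : ℝ} (ha : 0 ≤ a) (hra : r ≤ a)
    (hrb : r ≤ b) (hrab : r ≤ a + b - d) (had : a = d → d < b) :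
    ∃ C > 0, ∀ M ≥ 1, ∀ F : Finset (Fin d → ℤ), (∀ n ∈ F, znorm n ≤ M) →
      M ^ (-b) * ∑ n ∈ F, znorm n ^ (-a) ≤ C * M ^ (-r) := by
  rcases lt_trichotomy a d with had' | rfl | had'
  · obtain ⟨C, hC, h⟩ := exists_sum_znorm_rpow_neg_le_of_forall_le ha had'
    refine ⟨C, hC, fun M hM F hF => ?_⟩
    have hM₀ : 0 < M := by linarith
    calc M ^ (-b) * ∑ n ∈ F, znorm n ^ (-a) ≤ M ^ (-b) * (C * M ^ ((d : ℝ) - a)) := by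
          gcongr
          exact h M hM₀ F hF
      _ = C * M ^ ((d : ℝ) - a - b) := by
          rw [mul_left_comm, ← Real.rpow_add hM₀]
          ring_nf
      _ ≤ C * M ^ (-r) := by
          gcongr
          linarith
  · -- the logarithmic case: trade `znorm n ^ (-d)` for the summable `M ^ (b - d) * znorm n ^ (-b)`
    have hdb := had rfl
    obtain ⟨C, hC, h⟩ := exists_sum_znorm_rpow_neg_le hdb
    refine ⟨C, hC, fun M hM F hF => ?_⟩
    have hM₀ : 0 < M := by linarith
    calc M ^ (-b) * ∑ n ∈ F, znorm n ^ (-(d : ℝ))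
        ≤ M ^ (-b) * ∑ n ∈ F, M ^ (b - d) * znorm n ^ (-b) := by
          gcongr with n hn
          rw [show -(d : ℝ) = (b - d) + -b by ring, Real.rpow_add (znorm_pos n)]
          gcongr
          · exact Real.rpow_nonneg (znorm_pos n).le _
          · exact (znorm_pos n).le
          · exact hF n hn
      _ = M ^ (-(d : ℝ)) * ∑ n ∈ F, znorm n ^ (-b) := by
          rw [← mul_sum, ← mul_assoc, ← Real.rpow_add hM₀]
          ring_nf
      _ ≤ C * M ^ (-r) := by
          rw [mul_comm]
          gcongr
          exact h F
  · obtain ⟨C, hC, h⟩ := exists_sum_znorm_rpow_neg_le had'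
    refine ⟨C, hC, fun M hM F _ => ?_⟩
    calc M ^ (-b) * ∑ n ∈ F, znorm n ^ (-a) ≤ M ^ (-r) * C := by
          gcongr
          · exact sum_nonneg fun n _ => Real.rpow_nonneg (znorm_pos n).le _
          · exact h F
      _ = C * M ^ (-r) := mul_comm _ _

noncomputable def majorant (a b M : ℝ) (n : Fin d → ℤ) : ℝ :=
  znorm n ^ (-a) * max (znorm n) M ^ (-b)

theorem exists_summable_majorant_and_tsum_le {a b r : ℝ} (ha : 0 ≤ a)
    (hab : d < a + b) (hra : r ≤ a) (hrb : r ≤ b) (hrab : r ≤ a + b - d)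
    (had : a = d → d < b) :
    ∃ C > 0, ∀ M ≥ 1, Summable (majorant (d := d) a b M) ∧
      ∑' n, majorant (d := d) a b M n ≤ C * M ^ (-r) := by
  obtain ⟨C₁, hC₁, hnear⟩ := exists_rpow_neg_mul_sum_znorm_rpow_neg_le ha hra hrb hrab had
  obtain ⟨C₂, hC₂, hfar⟩ := exists_sum_znorm_rpow_neg_le_of_forall_ge hab
  refine ⟨C₁ + C₂, by positivity, fun M hM => ?_⟩
  have hM₀ : 0 < M := by linarith
  have hnonneg : 0 ≤ majorant (d := d) a b M :=
    fun n => mul_nonneg (Real.rpow_nonneg (znorm_pos n).le _)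
      (Real.rpow_nonneg (hM₀.le.trans (le_max_right _ _)) _)
  have hsum : ∀ F : Finset (Fin d → ℤ),
      ∑ n ∈ F, majorant a b M n ≤ (C₁ + C₂) * M ^ (-r) := by
    intro F
    rw [← sum_filter_add_sum_filter_not F fun n => znorm n ≤ M, add_mul]
    refine add_le_add ?_ ?_
    · calc ∑ n ∈ F with znorm n ≤ M, majorant a b M n
          = M ^ (-b) * ∑ n ∈ F with znorm n ≤ M, znorm n ^ (-a) := by
            rw [mul_sum]
            refine sum_congr rfl fun n hn => ?_
            rw [majorant, max_eq_right (mem_filter.1 hn).2, mul_comm]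
        _ ≤ C₁ * M ^ (-r) := hnear M hM _ fun n hn => (mem_filter.1 hn).2
    · calc ∑ n ∈ F with ¬znorm n ≤ M, majorant a b M n
          = ∑ n ∈ F with ¬znorm n ≤ M, znorm n ^ (-(a + b)) := by
            refine sum_congr rfl fun n hn => ?_
            rw [majorant, max_eq_left (not_le.1 (mem_filter.1 hn).2).le,
              ← Real.rpow_add (znorm_pos n), neg_add]
        _ ≤ C₂ * M ^ ((d : ℝ) - (a + b)) :=
            hfar M hM₀ _ fun n hn => (not_le.1 (mem_filter.1 hn).2).le
        _ ≤ C₂ * M ^ (-r) := by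
            gcongr
            linarith
  exact ⟨summable_of_sum_le hnonneg hsum, Real.tsum_le_of_sum_le hnonneg hsum⟩

theorem rpow_neg_le_two_rpow_mul_max_rpow_neg {x y M b : ℝ} (hx : 0 < x) (hb : 0 ≤ b)
    (hxy : x ≤ y) (hM : M ≤ x + y) : y ^ (-b) ≤ 2 ^ b * max x M ^ (-b) :=
  calc y ^ (-b) = 2 ^ b * (2 * y) ^ (-b) := by
        rw [Real.mul_rpow zero_le_two (by linarith), ← mul_assoc, ← Real.rpow_add two_pos,
          add_neg_cancel, Real.rpow_zero, one_mul]
    _ ≤ 2 ^ b * max x M ^ (-b) :=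
        mul_le_mul_of_nonneg_left (Real.rpow_le_rpow_of_nonpos (lt_max_of_lt_left hx)
          (max_le (by linarith) (by linarith)) (neg_nonpos.2 hb)) (by positivity)

theorem one_div_le_majorant_add_majorant {a b : ℝ} (ha : 0 ≤ a) (hb : 0 ≤ b)
    (m n : Fin d → ℤ) :
    1 / (znorm n ^ a * znorm (m - n) ^ b) ≤
      2 ^ b * majorant a b (znorm m) n + 2 ^ a * majorant b a (znorm m) (m - n) := by
  have htri : znorm m ≤ znorm n + znorm (m - n) := by
    simpa using znorm_add_le n (m - n)
  have hx := znorm_pos n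
  have hy := znorm_pos (m - n)
  rw [one_div, mul_inv, ← Real.rpow_neg hx.le, ← Real.rpow_neg hy.le, majorant, majorant]
  rcases le_total (znorm n) (znorm (m - n)) with h | h
  · refine le_add_of_le_of_nonneg ?_ (by positivity)
    rw [mul_left_comm]
    gcongr
    exact rpow_neg_le_two_rpow_mul_max_rpow_neg hx hb h htri
  · refine le_add_of_nonneg_of_le (by positivity) ?_
    rw [mul_comm, mul_left_comm]
    gcongr
    exact rpow_neg_le_two_rpow_mul_max_rpow_neg hy ha h (by linarith)

theorem summable_one_div_and_tsum_le_majorant {a b : ℝ} (ha : 0 ≤ a) (hb : 0 ≤ b)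
    (m : Fin d → ℤ) (hs₁ : Summable (majorant (d := d) a b (znorm m)))
    (hs₂ : Summable (majorant (d := d) b a (znorm m))) :
    (Summable fun n : Fin d → ℤ => 1 / (znorm n ^ a * znorm (m - n) ^ b)) ∧
      ∑' n : Fin d → ℤ, 1 / (znorm n ^ a * znorm (m - n) ^ b) ≤
        2 ^ b * ∑' n : Fin d → ℤ, majorant a b (znorm m) n +
          2 ^ a * ∑' n : Fin d → ℤ, majorant b a (znorm m) n := by
  have hs₂' : Summable fun n => majorant b a (znorm m) (m - n) :=
    (Equiv.subLeft m).summable_iff.2 hs₂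
  have hs := (hs₁.mul_left (2 ^ b)).add (hs₂'.mul_left (2 ^ a))
  have hbound := one_div_le_majorant_add_majorant ha hb m
  have hg := hs.of_nonneg_of_le (fun n => one_div_nonneg.2 (mul_nonneg
    (Real.rpow_nonneg (znorm_pos n).le a) (Real.rpow_nonneg (znorm_pos (m - n)).le b))) hbound
  refine ⟨hg, (hg.tsum_le_tsum hbound hs).trans_eq ?_⟩
  rw [(hs₁.mul_left _).tsum_add (hs₂'.mul_left _), tsum_mul_left, tsum_mul_left]
  congr 2
  exact (Equiv.subLeft m).tsum_eq (majorant b a (znorm m))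

end

theorem stmt0_general (d : ℕ) (a b : ℝ) (ha : 0 < a) (hb : 0 < b)
    (hab : (d : ℝ) < a + b) (hmax : max a b ≠ (d : ℝ)) :
    ∃ C : ℝ, 0 < C ∧ ∀ m : Fin d → ℤ,
      (Summable fun n₁ : Fin d → ℤ => 1 / (znorm n₁ ^ a * znorm (m - n₁) ^ b)) ∧
      ∑' n₁ : Fin d → ℤ, 1 / (znorm n₁ ^ a * znorm (m - n₁) ^ b)
        ≤ C / znorm m ^ min a (min b (a + b - d)) := by
  set r := min a (min b (a + b - d))
  have hra : r ≤ a := min_le_left _ _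
  have hrb : r ≤ b := (min_le_right _ _).trans (min_le_left _ _)
  have hrab : r ≤ a + b - d := (min_le_right _ _).trans (min_le_right _ _)
  obtain ⟨C₁, hC₁, h₁⟩ := exists_summable_majorant_and_tsum_le ha.le hab hra hrb hrab
    fun h => by contrapose! hmax; rw [h, max_eq_left hmax]
  obtain ⟨C₂, hC₂, h₂⟩ := exists_summable_majorant_and_tsum_le hb.le (by linarith)
    hrb hra (by linarith) fun h => by contrapose! hmax; rw [h, max_eq_right hmax]
  refine ⟨2 ^ b * C₁ + 2 ^ a * C₂, by positivity, fun m => ?_⟩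
  obtain ⟨hs₁, ht₁⟩ := h₁ (znorm m) (one_le_znorm m)
  obtain ⟨hs₂, ht₂⟩ := h₂ (znorm m) (one_le_znorm m)
  obtain ⟨hsum, htsum⟩ := summable_one_div_and_tsum_le_majorant ha.le hb.le m hs₁ hs₂
  refine ⟨hsum, htsum.trans ?_⟩
  calc 2 ^ b * ∑' n : Fin d → ℤ, majorant a b (znorm m) n +
        2 ^ a * ∑' n : Fin d → ℤ, majorant b a (znorm m) n
      ≤ (2 ^ b * C₁ + 2 ^ a * C₂) * znorm m ^ (-r) := by
        rw [add_mul, mul_assoc, mul_assoc]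
        gcongr
    _ = (2 ^ b * C₁ + 2 ^ a * C₂) / znorm m ^ r := by
        rw [Real.rpow_neg (znorm_pos m).le, div_eq_mul_inv]

theorem stmt0 (d : ℕ) (hd : 1 ≤ d) (a b : ℝ) (ha : 0 < a) (hb : 0 < b)
    (hab : (d : ℝ) < a + b) (hmax : max a b ≠ (d : ℝ)) :
    ∃ C : ℝ, 0 < C ∧ ∀ m : Fin d → ℤ,
      (Summable fun n₁ : Fin d → ℤ => 1 / (znorm n₁ ^ a * znorm (m - n₁) ^ b)) ∧
      ∑' n₁ : Fin d → ℤ, 1 / (znorm n₁ ^ a * znorm (m - n₁) ^ b)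
        ≤ C / znorm m ^ min a (min b (a + b - d)) :=
  stmt0_general d a b ha hb hab hmax
end

section
/- Let m, s ∈ ℕ and let f(Y₁,…,Y_m) be a real-valued polynomial of degree at most s in independent identically distributed Bernoulli random variables Y₁,…,Y_m taking values in {±1} each with probability 1/2. Then E[f⁴] ≤ 9^s · (E[f²])². -/
/-!
Induction on the number of variables. Splitting off `Y₀`, a polynomial of degree `≤ s` is
`f = G + Y₀ H` with `G`, `H` polynomials in the other variables of degrees `≤ s` and `≤ s - 1`.
Averaging over `Y₀ = ±1` kills the odd powers of `Y₀`, so `E f² = E G² + E H²` and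
`E f⁴ = E G⁴ + 6 E[G² H²] + E H⁴`. By Cauchy–Schwarz and induction,
`E[G² H²] ≤ (E G⁴ · E H⁴)^(1/2) ≤ 3^(2s-1) E G² · E H²`, and the three terms are at most
`9^s (E G²)²`, `2 · 9^s E G² · E H²` and `9^s (E H²)²`.
-/

/-- Expectation of a function of `m` i.i.d. Bernoulli ±1 random variables,
realized as the average over the uniform measure on `{±1}^m`. -/
noncomputable def bernExp (m : ℕ) (g : (Fin m → ℝ) → ℝ) : ℝ :=
  (∑ y : Fin m → Bool, g (fun i => if y i then 1 else -1)) / 2 ^ m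

open Finset

section

variable {m : ℕ}

lemma bernExp_add (g h : (Fin m → ℝ) → ℝ) :
    bernExp m (fun y => g y + h y) = bernExp m g + bernExp m h := by
  simp only [bernExp, sum_add_distrib, add_div]

lemma bernExp_const_mul (a : ℝ) (g : (Fin m → ℝ) → ℝ) :
    bernExp m (fun y => a * g y) = a * bernExp m g := by
  simp only [bernExp, ← mul_sum, mul_div_assoc]

lemma bernExp_nonneg {g : (Fin m → ℝ) → ℝ} (hg : ∀ y, 0 ≤ g y) : 0 ≤ bernExp m g :=
  div_nonneg (sum_nonneg fun _ _ => hg _) (by positivity)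

lemma bernExp_mul_sq_le (g h : (Fin m → ℝ) → ℝ) :
    bernExp m (fun y => g y * h y) ^ 2
      ≤ bernExp m (fun y => g y ^ 2) * bernExp m (fun y => h y ^ 2) := by
  simp only [bernExp, div_pow, div_mul_div_comm, ← sq]
  gcongr
  exact sum_mul_sq_le_sq_mul_sq _ _ _

lemma bernExp_zero (g : (Fin 0 → ℝ) → ℝ) : bernExp 0 g = g Fin.elim0 := by
  simp [bernExp, Subsingleton.elim _ (Fin.elim0 : Fin 0 → ℝ)]

lemma bernExp_succ (g : (Fin (m + 1) → ℝ) → ℝ) :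
    bernExp (m + 1) g = bernExp m (fun y => (g (Fin.cons 1 y) + g (Fin.cons (-1) y)) / 2) := by
  have hcons (b : Bool) (z : Fin m → Bool) :
      (fun i => if (Fin.cons b z : Fin (m + 1) → Bool) i then (1 : ℝ) else -1)
        = Fin.cons (if b then 1 else -1) (fun i => if z i then 1 else -1) := by
    funext i; cases i using Fin.cases <;> simp
  simp only [bernExp, ← (Fin.consEquiv fun _ => Bool).sum_comp, Fintype.sum_prod_type,
    Fin.consEquiv_apply, hcons, Fintype.sum_bool, if_true, Bool.false_eq_true, if_false,
    ← sum_add_distrib, sum_div, pow_succ]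
  refine sum_congr rfl fun _ _ => by ring

lemma bernExp_succ_sq (G H : (Fin m → ℝ) → ℝ) :
    bernExp (m + 1) (fun Y => (G (Fin.tail Y) + Y 0 * H (Fin.tail Y)) ^ 2)
      = bernExp m (fun y => G y ^ 2) + bernExp m (fun y => H y ^ 2) := by
  have hpt (a b : ℝ) : ((a + 1 * b) ^ 2 + (a + -1 * b) ^ 2) / 2 = a ^ 2 + b ^ 2 := by ring
  simp only [bernExp_succ, Fin.tail_cons, Fin.cons_zero, hpt, bernExp_add]

lemma bernExp_succ_pow_four (G H : (Fin m → ℝ) → ℝ) :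
    bernExp (m + 1) (fun Y => (G (Fin.tail Y) + Y 0 * H (Fin.tail Y)) ^ 4)
      = bernExp m (fun y => G y ^ 4) + 6 * bernExp m (fun y => G y ^ 2 * H y ^ 2)
        + bernExp m (fun y => H y ^ 4) := by
  have hpt (a b : ℝ) :
      ((a + 1 * b) ^ 4 + (a + -1 * b) ^ 4) / 2 = a ^ 4 + 6 * (a ^ 2 * b ^ 2) + b ^ 4 := by ring
  simp only [bernExp_succ, Fin.tail_cons, Fin.cons_zero, hpt, bernExp_add, bernExp_const_mul]

lemma add_six_mul_add_le {K g₂ h₂ g₄ h₄ A : ℝ} (hK : 0 ≤ K) (hg₂ : 0 ≤ g₂) (hh₂ : 0 ≤ h₂)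
    (hh₄ : 0 ≤ h₄) (hg : g₄ ≤ K * g₂ ^ 2) (hh : 9 * h₄ ≤ K * h₂ ^ 2) (hA : A ^ 2 ≤ g₄ * h₄) :
    g₄ + 6 * A + h₄ ≤ K * (g₂ + h₂) ^ 2 := by
  have hA3 : (3 * A) ^ 2 ≤ (K * g₂ * h₂) ^ 2 := calc
    (3 * A) ^ 2 ≤ g₄ * (9 * h₄) := by nlinarith
    _ ≤ K * g₂ ^ 2 * (K * h₂ ^ 2) := mul_le_mul hg hh (by positivity) (by positivity)
    _ = (K * g₂ * h₂) ^ 2 := by ring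
  have := (abs_le_of_sq_le_sq hA3 (by positivity)).trans' (le_abs_self _)
  nlinarith

lemma sum_finset_fin_succ {M : Type*} [AddCommMonoid M] (F : Finset (Fin (m + 1)) → M) :
    ∑ S, F S = ∑ T : Finset (Fin m), F (T.map (Fin.succEmb m))
      + ∑ T : Finset (Fin m), F (insert 0 (T.map (Fin.succEmb m))) := by
  have huniv : (univ : Finset (Fin (m + 1))) = insert 0 (univ.map (Fin.succEmb m)) := by
    ext i; cases i using Fin.cases <;> simp
  have hinj := image_injOn_powerset_of_injOn (s := univ) (Fin.succEmb m).injective.injOn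
  rw [← powerset_univ, huniv, sum_powerset_insert (by simp), map_eq_image, powerset_image,
    sum_image hinj, sum_image hinj]
  simp [map_eq_image]

def multilin (c : Finset (Fin m) → ℝ) (Y : Fin m → ℝ) : ℝ :=
  ∑ S, c S * ∏ i ∈ S, Y i

def coeffWithoutZero (c : Finset (Fin (m + 1)) → ℝ) (T : Finset (Fin m)) : ℝ :=
  c (T.map (Fin.succEmb m))

def coeffWithZero (c : Finset (Fin (m + 1)) → ℝ) (T : Finset (Fin m)) : ℝ :=
  c (insert 0 (T.map (Fin.succEmb m)))

lemma multilin_eq_add_mul (c : Finset (Fin (m + 1)) → ℝ) (Y : Fin (m + 1) → ℝ) :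
    multilin c Y = multilin (coeffWithoutZero c) (Fin.tail Y)
      + Y 0 * multilin (coeffWithZero c) (Fin.tail Y) := by
  have hprod (T : Finset (Fin m)) : ∏ i ∈ T.map (Fin.succEmb m), Y i = ∏ i ∈ T, Fin.tail Y i :=
    prod_map _ _ _
  simp only [multilin, coeffWithoutZero, coeffWithZero, sum_finset_fin_succ, mul_sum, hprod]
  congr 1
  refine sum_congr rfl fun T _ => ?_
  rw [prod_insert (by simp), hprod]
  ring

lemma coeffWithoutZero_eq_zero {s : ℕ} {c : Finset (Fin (m + 1)) → ℝ}
    (hc : ∀ S, s < #S → c S = 0) (T : Finset (Fin m)) (hT : s < #T) : coeffWithoutZero c T = 0 :=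
  hc _ (by rwa [card_map])

lemma coeffWithZero_eq_zero {s : ℕ} {c : Finset (Fin (m + 1)) → ℝ}
    (hc : ∀ S, s < #S → c S = 0) (T : Finset (Fin m)) (hT : s ≤ #T) : coeffWithZero c T = 0 :=
  hc _ (by rw [card_insert_of_notMem (by simp), card_map]; omega)

end

theorem stmt2 (m s : ℕ) (c : Finset (Fin m) → ℝ)
    (hdeg : ∀ S : Finset (Fin m), s < S.card → c S = 0) :
    bernExp m (fun Y => (∑ S : Finset (Fin m), c S * ∏ i ∈ S, Y i) ^ 4)
      ≤ 9 ^ s * bernExp m (fun Y => (∑ S : Finset (Fin m), c S * ∏ i ∈ S, Y i) ^ 2) ^ 2 := by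
  show bernExp m (fun Y => multilin c Y ^ 4) ≤ 9 ^ s * bernExp m (fun Y => multilin c Y ^ 2) ^ 2
  induction m generalizing s with
  | zero =>
    simp only [bernExp_zero, ← pow_mul]
    exact le_mul_of_one_le_left (by positivity) (one_le_pow₀ (by norm_num))
  | succ m ih =>
    set G := multilin (coeffWithoutZero c)
    set H := multilin (coeffWithZero c)
    simp only [multilin_eq_add_mul c, bernExp_succ_pow_four, bernExp_succ_sq]
    -- `9 * E H⁴` on the left rather than `9 ^ (s - 1)` on the right, which is `1` at `s = 0`
    have hH : 9 * bernExp m (fun y => H y ^ 4) ≤ 9 ^ s * bernExp m (fun y => H y ^ 2) ^ 2 := by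
      cases s with
      | zero =>
        have hH0 : coeffWithZero c = 0 := funext fun T => coeffWithZero_eq_zero hdeg T (Nat.zero_le _)
        simp [H, hH0, multilin, bernExp]
      | succ t =>
        rw [pow_succ', mul_assoc]
        exact mul_le_mul_of_nonneg_left (ih t _ (coeffWithZero_eq_zero hdeg)) (by norm_num)
    refine add_six_mul_add_le (by positivity) (bernExp_nonneg fun _ => by positivity)
      (bernExp_nonneg fun _ => by positivity) (bernExp_nonneg fun _ => by positivity)
      (ih s _ (coeffWithoutZero_eq_zero hdeg)) hH ?_
    convert bernExp_mul_sq_le (fun y => G y ^ 2) (fun y => H y ^ 2) using 4 <;> ring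
end
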